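/- For any real symmetric B×B matrix Σ, there exists an orthogonal matrix R ∈ O(B) such that every diagonal entry of RΣRᵀ equals tr(Σ)/B. -/

import Mathlib

/-!
In any orthonormal basis the diagonal entries `⟪e i, T e i⟫` of an operator `T` average to
`μ = tr T / n`, so one of them is `≥ μ` and another `≤ μ`. The unit sphere is connected once
`n ≥ 2`, so by the intermediate value theorem some unit vector `v` has `⟪v, T v⟫ = μ`. The
compression of `T` to `v^⊥` has trace `tr T - μ = (n - 1) μ`, hence the same average `μ`, and
induction on the dimension produces an orthonormal basis on which every diagonal entry is `μ`.
For a matrix `A`, the rows of `R` are such a basis for `A` acting on `EuclideanSpace ℝ (Fin B)`.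
-/

open Matrix Module
open scoped InnerProductSpace

section Orthonormal

variable {𝕜 E : Type*} [RCLike 𝕜] [NormedAddCommGroup E] [InnerProductSpace 𝕜 E]

theorem orthonormal_fin_cons {n : ℕ} {v : E} {w : Fin n → E} (hv : ‖v‖ = 1)
    (hw : Orthonormal 𝕜 w) (hvw : ∀ i, ⟪v, w i⟫_𝕜 = 0) :
    Orthonormal 𝕜 (Fin.cons v w : Fin (n + 1) → E) := by
  refine ⟨fun i => Fin.cases hv (fun i => hw.1 i) i, fun i j hij => ?_⟩
  cases i using Fin.cases <;> cases j using Fin.cases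
  · exact absurd rfl hij
  · exact hvw _
  · exact inner_eq_zero_symm.mp (hvw _)
  · exact hw.2 fun h => hij (congrArg Fin.succ h)

theorem Orthonormal.trace_eq_sum_inner [FiniteDimensional 𝕜 E] {ι : Type*} [Fintype ι]
    {w : ι → E} (hw : Orthonormal 𝕜 w) (hcard : Fintype.card ι = finrank 𝕜 E)
    (T : E →ₗ[𝕜] E) : LinearMap.trace 𝕜 E T = ∑ i, ⟪w i, T (w i)⟫_𝕜 := by
  have hspan : Submodule.span 𝕜 (Set.range w) = ⊤ := by
    refine Submodule.eq_top_of_finrank_eq ?_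
    rw [← hcard, ← finrank_span_eq_card hw.linearIndependent]
  simpa using LinearMap.trace_eq_sum_inner T (OrthonormalBasis.mk hw hspan.ge)

end Orthonormal

namespace Submodule

variable {𝕜 E : Type*} [RCLike 𝕜] [NormedAddCommGroup E] [InnerProductSpace 𝕜 E]

noncomputable def compression (K : Submodule 𝕜 E) [K.HasOrthogonalProjection]
    (T : E →ₗ[𝕜] E) : K →ₗ[𝕜] K :=
  K.orthogonalProjectionOnto.toLinearMap ∘ₗ T ∘ₗ K.subtype

theorem inner_compression_apply (K : Submodule 𝕜 E) [K.HasOrthogonalProjection]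
    (T : E →ₗ[𝕜] E) (u w : K) : ⟪u, K.compression T w⟫_𝕜 = ⟪(u : E), T w⟫_𝕜 :=
  inner_orthogonalProjectionOnto_eq_of_mem_left u (T w)

theorem trace_eq_inner_add_trace_compression [FiniteDimensional 𝕜 E] {v : E} (hv : ‖v‖ = 1)
    (T : E →ₗ[𝕜] E) :
    LinearMap.trace 𝕜 E T = ⟪v, T v⟫_𝕜 + LinearMap.trace 𝕜 _ ((𝕜 ∙ v)ᗮ.compression T) := by
  set K := (𝕜 ∙ v)ᗮ
  let e := stdOrthonormalBasis 𝕜 K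
  have hv0 : v ≠ 0 := by rintro rfl; simp at hv
  have hw : Orthonormal 𝕜 (Fin.cons v (K.subtype ∘ e) : Fin (finrank 𝕜 K + 1) → E) :=
    orthonormal_fin_cons hv (e.orthonormal.comp_linearIsometry K.subtypeₗᵢ)
      fun i => mem_orthogonal_singleton_iff_inner_right.mp (e i).2
  have hcard : Fintype.card (Fin (finrank 𝕜 K + 1)) = finrank 𝕜 E := by
    rw [Fintype.card_fin, ← finrank_span_singleton (K := 𝕜) hv0, add_comm,
      finrank_add_finrank_orthogonal]
  rw [hw.trace_eq_sum_inner hcard, Fin.sum_univ_succ, LinearMap.trace_eq_sum_inner _ e]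
  simp only [Fin.cons_zero, Fin.cons_succ, Function.comp_apply, Submodule.subtype_apply]
  congr 1
  exact Finset.sum_congr rfl fun i _ => (inner_compression_apply _ T _ _).symm

end Submodule

section Real

variable {E : Type*} [NormedAddCommGroup E] [InnerProductSpace ℝ E] [FiniteDimensional ℝ E]

theorem exists_norm_eq_one_inner_self_eq_trace_div [Nontrivial E] (T : E →ₗ[ℝ] E) :
    ∃ v : E, ‖v‖ = 1 ∧ ⟪v, T v⟫_ℝ = LinearMap.trace ℝ E T / finrank ℝ E := by
  set μ := LinearMap.trace ℝ E T / finrank ℝ E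
  let e := stdOrthonormalBasis ℝ E
  have : NeZero (finrank ℝ E) := ⟨finrank_pos.ne'⟩
  have hsum : ∑ _i : Fin (finrank ℝ E), μ = ∑ i, ⟪e i, T (e i)⟫_ℝ := by
    rw [← LinearMap.trace_eq_sum_inner T e, Finset.sum_const, Finset.card_univ, Fintype.card_fin,
      nsmul_eq_mul, mul_div_cancel₀ _ (Nat.cast_ne_zero.mpr finrank_pos.ne')]
  obtain ⟨i, -, hi⟩ := Finset.exists_le_of_sum_le Finset.univ_nonempty hsum.le
  obtain ⟨j, -, hj⟩ := Finset.exists_le_of_sum_le Finset.univ_nonempty hsum.ge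
  by_cases hij : i = j
  · subst hij
    exact ⟨e i, e.orthonormal.1 i, le_antisymm hj hi⟩
  have hrank : 1 < Module.rank ℝ E := by
    refine one_lt_rank_of_one_lt_finrank ?_
    simpa using Fintype.one_lt_card_iff_nontrivial.mpr ⟨i, j, hij⟩
  have hcont : Continuous fun v : E => ⟪v, T v⟫_ℝ := by
    have := T.continuous_of_finiteDimensional
    fun_prop
  obtain ⟨v, hv, hμ⟩ := (isPreconnected_sphere hrank 0 1).intermediate_value
    (by simp) (by simp) hcont.continuousOn ⟨hj, hi⟩
  exact ⟨v, by simpa using hv, hμ⟩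

theorem exists_orthonormal_inner_self_eq_trace_div {n : ℕ} (hn : finrank ℝ E = n)
    (T : E →ₗ[ℝ] E) :
    ∃ w : Fin n → E, Orthonormal ℝ w ∧ ∀ i, ⟪w i, T (w i)⟫_ℝ = LinearMap.trace ℝ E T / n := by
  induction n generalizing E with
  | zero => exact ⟨Fin.elim0, ⟨fun i => i.elim0, fun i => i.elim0⟩, fun i => i.elim0⟩
  | succ n ih =>
    have : Nontrivial E := Module.nontrivial_of_finrank_eq_succ hn
    have : Fact (finrank ℝ E = n + 1) := ⟨hn⟩
    obtain ⟨v, hv, hvT⟩ := exists_norm_eq_one_inner_self_eq_trace_div T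
    rw [hn] at hvT
    obtain ⟨w, hw, hwT⟩ := ih (Submodule.finrank_orthogonal_span_singleton (v := v)
      (by rintro rfl; simp at hv)) ((ℝ ∙ v)ᗮ.compression T)
    have htrace : LinearMap.trace ℝ _ ((ℝ ∙ v)ᗮ.compression T) =
        n * (LinearMap.trace ℝ E T / (n + 1 : ℕ)) := by
      rw [eq_sub_of_add_eq' (Submodule.trace_eq_inner_add_trace_compression hv T).symm, hvT]
      push_cast
      field_simp
      ring
    refine ⟨Fin.cons v ((ℝ ∙ v)ᗮ.subtype ∘ w), orthonormal_fin_cons hv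
      (hw.comp_linearIsometry (ℝ ∙ v)ᗮ.subtypeₗᵢ)
      (fun i => Submodule.mem_orthogonal_singleton_iff_inner_right.mp (w i).2), fun i => ?_⟩
    cases i using Fin.cases with
    | zero => exact hvT
    | succ i =>
      have hn0 : (n : ℝ) ≠ 0 := Nat.cast_ne_zero.mpr i.pos.ne'
      simp only [Fin.cons_succ, Function.comp_apply, Submodule.subtype_apply]
      rw [← Submodule.inner_compression_apply, hwT, htrace, mul_div_cancel_left₀ _ hn0]

end Real

namespace Matrix

variable {l m : Type*} [Fintype m] [DecidableEq m]

theorem mem_orthogonalGroup_iff_orthonormal_rows [DecidableEq l] [Fintype l] {R : Matrix l l ℝ} :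
    R ∈ orthogonalGroup l ℝ ↔ Orthonormal ℝ fun i => WithLp.toLp 2 (R i) := by
  rw [mem_orthogonalGroup_iff, orthonormal_iff_ite, ← Matrix.ext_iff]
  simp only [inner_matrix_row_row, conjTranspose_eq_transpose_of_trivial, one_apply]
  rw [forall_comm]
  simp only [eq_comm (a := (_ : l))]

theorem mul_mul_transpose_apply_self (R : Matrix l m ℝ) (A : Matrix m m ℝ) (i : l) :
    (R * A * Rᵀ) i i = ⟪WithLp.toLp 2 (R i), toEuclideanLin A (WithLp.toLp 2 (R i))⟫_ℝ := by
  simp only [EuclideanSpace.inner_eq_star_dotProduct, toLpLin_toLp, toLin'_apply, mul_apply,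
    transpose_apply, dotProduct, mulVec, star_trivial, Finset.sum_mul]
  rw [Finset.sum_comm]
  exact Finset.sum_congr rfl fun _ _ => Finset.sum_congr rfl fun _ _ => by ring

theorem trace_toEuclideanLin (A : Matrix m m ℝ) :
    LinearMap.trace ℝ _ (toEuclideanLin A) = A.trace := by
  rw [toEuclideanLin_eq_toLin_orthonormal, LinearMap.trace_eq_matrix_trace ℝ
    (EuclideanSpace.basisFun m ℝ).toBasis, LinearMap.toMatrix_toLin]

end Matrix

theorem exists_orthogonal_equal_diagonal_general (B : ℕ) (A : Matrix (Fin B) (Fin B) ℝ) :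
    ∃ R : Matrix (Fin B) (Fin B) ℝ, R ∈ Matrix.orthogonalGroup (Fin B) ℝ ∧
      ∀ b, (R * A * Rᵀ) b b = A.trace / B := by
  obtain ⟨w, hw, hdiag⟩ :=
    exists_orthonormal_inner_self_eq_trace_div finrank_euclideanSpace_fin (toEuclideanLin A)
  refine ⟨Matrix.of fun i => (w i).ofLp, mem_orthogonalGroup_iff_orthonormal_rows.mpr hw,
    fun b => ?_⟩
  rw [mul_mul_transpose_apply_self, ← trace_toEuclideanLin]
  exact hdiag b

/-- For any real symmetric `B×B` matrix `A` there is an orthogonal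
`R` such that every diagonal entry of `RΣRᵀ` equals `tr(A)/B`. -/
theorem exists_orthogonal_equal_diagonal (B : ℕ) (hB : 0 < B)
    (A : Matrix (Fin B) (Fin B) ℝ) (hA : A.IsSymm) :
    ∃ R : Matrix (Fin B) (Fin B) ℝ, R ∈ Matrix.orthogonalGroup (Fin B) ℝ ∧
      ∀ b, (R * A * Rᵀ) b b = A.trace / B :=
  exists_orthogonal_equal_diagonal_general B A
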